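/- Let B be a unital C*-algebra, A ⊆ B a complex linear subspace, and x ∈ A. Then x * a ∈ A for every a ∈ A if and only if for every y ∈ B with star y ∈ A and ‖y‖ ≤ 1, there exists z ∈ A such that condition C(x, y, z) holds. -/
import Mathlib

/-- The canonical C*-matrix norm on matrices over a C*-algebra `A`, obtained by viewing an
`m × n` matrix as an operator between the Hilbert C*-modules `A^n` and `A^m` (as in
Mathlib's `CStarMatrix`).  For square matrices this is the unique C*-algebra norm. -/
noncomputable def cstarMatrixNorm {A : Type*} [NonUnitalNormedRing A] [StarRing A]
    {m n : ℕ} (M : Matrix (Fin m) (Fin n) A) : ℝ :=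
  sSup {r : ℝ | ∃ v : Fin n → A, ‖∑ i, star (v i) * v i‖ ≤ 1 ∧
    r = Real.sqrt ‖∑ j, star (M.mulVec v j) * M.mulVec v j‖}

/-- Condition C(x, y, z) of Section 6: for every `b ∈ B`, the 2×4 matrix over `B` with rows
`(0, y, 1, 0)` and `(2·1, x, z, b)` has the same norm as the row matrix `(2·1, x, z, b)`. -/
def CondC {B : Type*} [NormedRing B] [StarRing B] (x y z : B) : Prop :=
  ∀ b : B, cstarMatrixNorm !![0, y, 1, 0; 2, x, z, b] = cstarMatrixNorm !![(2 : B), x, z, b]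

namespace LeftMultAux

open Finset

variable {B : Type*} [CStarAlgebra B] [PartialOrder B] [StarOrderedRing B]

lemma expand_point (lsq : ℝ) (r1 r2 u w vi : B) :
    star (star r1 * u + star r2 * w - lsq • vi) * (star r1 * u + star r2 * w - lsq • vi)
    = star u * (r1 * star r1) * u + star u * (r1 * star r2) * w
      + star w * (r2 * star r1) * u + star w * (r2 * star r2) * w
      - lsq • (star u * (r1 * vi)) - lsq • (star w * (r2 * vi))
      - lsq • (star (vi) * (star r1 * u)) - lsq • (star vi * (star r2 * w))
      + (lsq * lsq) • (star vi * vi) := by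
  simp only [star_add, star_sub, star_mul, star_smul, star_star, star_trivial]
  simp only [mul_add, add_mul, sub_mul, mul_sub, smul_mul_assoc, mul_smul_comm, smul_smul,
    smul_add, smul_sub, neg_smul, smul_neg, mul_assoc]
  abel

lemma key_ineq {n : ℕ} (r1 r2 v : Fin n → B) (lsq : ℝ) (hl : 0 < lsq)
    (horth : ∑ i, r1 i * star (r2 i) = 0)
    (h1 : ‖∑ i, r1 i * star (r1 i)‖ ≤ lsq)
    (h2 : ‖∑ i, r2 i * star (r2 i)‖ ≤ lsq)
    (hv : ‖∑ i, star (v i) * v i‖ ≤ 1) :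
    ‖star (∑ i, r1 i * v i) * (∑ i, r1 i * v i)
      + star (∑ i, r2 i * v i) * (∑ i, r2 i * v i)‖ ≤ lsq := by
  set u := ∑ i, r1 i * v i with hu
  set w := ∑ i, r2 i * v i with hw
  set d : B := ∑ i, r1 i * star (r1 i) with hd
  set e : B := ∑ i, r2 i * star (r2 i) with he
  set T : B := ∑ i, star (v i) * v i with hT
  have horth' : ∑ i, r2 i * star (r1 i) = 0 := by
    have := congrArg star horth
    simpa [star_sum] using this
  have starsum1 : ∑ i, star (v i) * star (r1 i) = star u := by
    rw [hu, star_sum]; exact Finset.sum_congr rfl fun i _ => (star_mul _ _).symm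
  have starsum2 : ∑ i, star (v i) * star (r2 i) = star w := by
    rw [hw, star_sum]; exact Finset.sum_congr rfl fun i _ => (star_mul _ _).symm
  have e1 : ∑ i, star u * (r1 i * star (r1 i)) * u = star u * d * u := by
    rw [← Finset.sum_mul, ← Finset.mul_sum]
  have e2 : ∑ i, star u * (r1 i * star (r2 i)) * w = 0 := by
    rw [← Finset.sum_mul, ← Finset.mul_sum, horth, mul_zero, zero_mul]
  have e3 : ∑ i, star w * (r2 i * star (r1 i)) * u = 0 := by
    rw [← Finset.sum_mul, ← Finset.mul_sum, horth', mul_zero, zero_mul]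
  have e4 : ∑ i, star w * (r2 i * star (r2 i)) * w = star w * e * w := by
    rw [← Finset.sum_mul, ← Finset.mul_sum]
  have e5 : ∑ i, star u * (r1 i * v i) = star u * u := by rw [← Finset.mul_sum, ← hu]
  have e6 : ∑ i, star w * (r2 i * v i) = star w * w := by rw [← Finset.mul_sum, ← hw]
  have e7 : ∑ i, star (v i) * (star (r1 i) * u) = star u * u := by
    simp only [← mul_assoc]
    rw [← Finset.sum_mul, starsum1]
  have e8 : ∑ i, star (v i) * (star (r2 i) * w) = star w * w := by
    simp only [← mul_assoc]
    rw [← Finset.sum_mul, starsum2]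
  have expand : ∑ i, star (star (r1 i) * u + star (r2 i) * w - lsq • v i)
      * (star (r1 i) * u + star (r2 i) * w - lsq • v i)
      = star u * d * u + star w * e * w
        - lsq • (star u * u) - lsq • (star w * w)
        - lsq • (star u * u) - lsq • (star w * w)
        + (lsq * lsq) • T := by
    rw [Finset.sum_congr rfl (fun i _ => expand_point lsq (r1 i) (r2 i) u w (v i))]
    simp only [Finset.sum_add_distrib, Finset.sum_sub_distrib, ← Finset.smul_sum]
    rw [e1, e2, e3, e4, e5, e6, e7, e8, hT]
    abel
  have hpos : (0:B) ≤ star u * d * u + star w * e * w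
        - lsq • (star u * u) - lsq • (star w * w)
        - lsq • (star u * u) - lsq • (star w * w)
        + (lsq * lsq) • T := by
    rw [← expand]; exact Finset.sum_nonneg fun i _ => star_mul_self_nonneg _
  have honeB : (0:B) ≤ 1 := by simpa using star_mul_self_nonneg (1:B)
  have conj_bound : ∀ (a dd : B), 0 ≤ dd → ‖dd‖ ≤ lsq → star a * dd * a ≤ lsq • (star a * a) := by
    intro a dd hdd hnorm
    have hsa : IsSelfAdjoint dd := IsSelfAdjoint.of_nonneg hdd
    have h1' : dd ≤ algebraMap ℝ B lsq := by
      refine le_trans (hsa.le_algebraMap_norm_self) ?_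
      rw [← sub_nonneg, ← map_sub, Algebra.algebraMap_eq_smul_one]
      exact smul_nonneg (sub_nonneg.mpr hnorm) honeB
    calc star a * dd * a ≤ star a * algebraMap ℝ B lsq * a := star_left_conjugate_le_conjugate h1' a
      _ = lsq • (star a * a) := by
          rw [Algebra.algebraMap_eq_smul_one]
          simp [mul_smul_comm, smul_mul_assoc]
  have hdpos : (0:B) ≤ d := Finset.sum_nonneg fun i _ => mul_star_self_nonneg _
  have hepos : (0:B) ≤ e := Finset.sum_nonneg fun i _ => mul_star_self_nonneg _
  have hA : star u * d * u ≤ lsq • (star u * u) := conj_bound u d hdpos h1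
  have hB : star w * e * w ≤ lsq • (star w * w) := conj_bound w e hepos h2
  set a1 : B := star u * u with ha1
  set a2 : B := star w * w with ha2
  have key1 : lsq • a1 + lsq • a2 + (lsq • a1 + lsq • a2)
      ≤ star u * d * u + star w * e * w + (lsq * lsq) • T := by
    have hrw : star u * d * u + star w * e * w - lsq • a1 - lsq • a2 - lsq • a1 - lsq • a2
        + (lsq * lsq) • T
        = (star u * d * u + star w * e * w + (lsq * lsq) • T)
          - (lsq • a1 + lsq • a2 + (lsq • a1 + lsq • a2)) := by abel
    rw [hrw] at hpos
    exact sub_nonneg.mp hpos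
  have key2 : lsq • a1 + lsq • a2 + (lsq • a1 + lsq • a2)
      ≤ lsq • a1 + lsq • a2 + (lsq * lsq) • T :=
    key1.trans (by exact add_le_add (add_le_add hA hB) le_rfl)
  have key3 : lsq • (a1 + a2) ≤ (lsq * lsq) • T := by
    have := le_of_add_le_add_left key2
    rwa [smul_add]
  have key4 : a1 + a2 ≤ lsq • T := by
    have := smul_le_smul_of_nonneg_left key3 (inv_nonneg.mpr hl.le)
    rwa [smul_smul, smul_smul, inv_mul_cancel₀ hl.ne', one_smul, ← mul_assoc,
      inv_mul_cancel₀ hl.ne', one_mul] at this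
  have hnn : (0:B) ≤ a1 + a2 := add_nonneg (star_mul_self_nonneg _) (star_mul_self_nonneg _)
  calc ‖a1 + a2‖ ≤ ‖lsq • T‖ := CStarAlgebra.norm_le_norm_of_nonneg_of_le hnn key4
    _ = lsq * ‖T‖ := by rw [norm_smul, Real.norm_eq_abs, abs_of_pos hl]
    _ ≤ lsq * 1 := by nlinarith [norm_nonneg T]
    _ = lsq := mul_one lsq

lemma key_ineq1 {n : ℕ} (r v : Fin n → B) (lsq : ℝ) (hl : 0 < lsq)
    (h : ‖∑ i, r i * star (r i)‖ ≤ lsq)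
    (hv : ‖∑ i, star (v i) * v i‖ ≤ 1) :
    ‖star (∑ i, r i * v i) * (∑ i, r i * v i)‖ ≤ lsq := by
  have := key_ineq (fun _ => 0) r v lsq hl (by simp) (by simp [hl.le]) h hv
  simpa using this


section Explicit

variable (x y z b : B)

/-- The "self-product" of the row `(2, x, z, b)`. -/
noncomputable def pel (x z b : B) : B :=
  2 * star (2:B) + x * star x + z * star z + b * star b

lemma pel_nonneg : 0 ≤ pel x z b := by
  refine add_nonneg (add_nonneg (add_nonneg ?_ ?_) ?_) ?_ <;> exact mul_star_self_nonneg _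

lemma pel_star : star (pel x z b) = pel x z b :=
  (IsSelfAdjoint.of_nonneg (pel_nonneg x z b)).star_eq

lemma four_le_pel : (4:B) ≤ pel x z b := by
  have h0 : (2:B) * star (2:B) = 4 := by
    rw [show star (2:B) = 2 by simp]; norm_num
  have h1 : pel x z b = 4 + (x * star x + z * star z + b * star b) := by
    rw [pel, h0]; abel
  rw [h1]
  refine le_add_of_nonneg_right ?_
  exact add_nonneg (add_nonneg (mul_star_self_nonneg _) (mul_star_self_nonneg _))
    (mul_star_self_nonneg _)

lemma four_le_norm_pel [Nontrivial B] : (4:ℝ) ≤ ‖pel x z b‖ := by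
  have h4 : (0:B) ≤ 4 := by
    have := star_mul_self_nonneg (2:B)
    rwa [show star (2:B) * 2 = 4 by rw [show star (2:B) = 2 by simp]; norm_num] at this
  have := CStarAlgebra.norm_le_norm_of_nonneg_of_le h4 (four_le_pel x z b)
  rwa [show ‖(4:B)‖ = 4 by
    rw [show (4:B) = (4:ℝ) • 1 by rw [← Algebra.algebraMap_eq_smul_one, map_ofNat],
      norm_smul, norm_one, Real.norm_eq_abs]; norm_num] at this

lemma norm_pel_pos [Nontrivial B] : (0:ℝ) < ‖pel x z b‖ :=
  lt_of_lt_of_le (by norm_num) (four_le_norm_pel x z b)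

lemma mulVec_row (v : Fin 4 → B) :
    ∑ j, star ((!![(2:B), x, z, b]).mulVec v j) * ((!![(2:B), x, z, b]).mulVec v j)
      = star (2 * v 0 + x * v 1 + z * v 2 + b * v 3)
        * (2 * v 0 + x * v 1 + z * v 2 + b * v 3) := by
  simp [Matrix.mulVec, dotProduct, Fin.sum_univ_four]

lemma mulVec_two (v : Fin 4 → B) :
    ∑ j, star ((!![0, y, 1, 0; 2, x, z, b]).mulVec v j)
        * ((!![0, y, 1, 0; 2, x, z, b]).mulVec v j)
      = star (y * v 1 + v 2) * (y * v 1 + v 2)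
        + star (2 * v 0 + x * v 1 + z * v 2 + b * v 3)
          * (2 * v 0 + x * v 1 + z * v 2 + b * v 3) := by
  simp [Matrix.mulVec, dotProduct, Fin.sum_univ_four, Fin.sum_univ_two]

/-- The norm-attaining vector for the row `(2, x, z, b)`. -/
noncomputable def vopt (x z b : B) : Fin 4 → B :=
  ![(Real.sqrt ‖pel x z b‖)⁻¹ • star (2:B), (Real.sqrt ‖pel x z b‖)⁻¹ • star x,
    (Real.sqrt ‖pel x z b‖)⁻¹ • star z, (Real.sqrt ‖pel x z b‖)⁻¹ • star b]

lemma vopt_sq :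
    (Real.sqrt ‖pel x z b‖)⁻¹ * (Real.sqrt ‖pel x z b‖)⁻¹ = ‖pel x z b‖⁻¹ := by
  rw [← mul_inv, Real.mul_self_sqrt (norm_nonneg _)]

lemma vopt_constraint [Nontrivial B] :
    ‖∑ i, star (vopt x z b i) * vopt x z b i‖ ≤ 1 := by
  have hsum : ∑ i, star (vopt x z b i) * vopt x z b i = ‖pel x z b‖⁻¹ • pel x z b := by
    simp only [Fin.sum_univ_four, vopt, Matrix.cons_val_zero, Matrix.cons_val_one,
      Matrix.head_cons, Matrix.cons_val_two, Matrix.tail_cons, Matrix.cons_val_three,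
      star_smul, star_star, star_trivial, smul_mul_smul_comm]
    rw [vopt_sq, pel, ← smul_add, ← smul_add, ← smul_add]
  rw [hsum, norm_smul, Real.norm_eq_abs, abs_of_nonneg (by positivity),
    inv_mul_cancel₀ (norm_pel_pos x z b).ne']

lemma vopt_rowval [Nontrivial B] :
    2 * vopt x z b 0 + x * vopt x z b 1 + z * vopt x z b 2 + b * vopt x z b 3
      = (Real.sqrt ‖pel x z b‖)⁻¹ • pel x z b := by
  simp only [vopt, Matrix.cons_val_zero, Matrix.cons_val_one, Matrix.head_cons,
    Matrix.cons_val_two, Matrix.tail_cons, Matrix.cons_val_three, mul_smul_comm]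
  rw [pel, ← smul_add, ← smul_add, ← smul_add]

lemma vopt_rownorm [Nontrivial B] :
    ‖star ((Real.sqrt ‖pel x z b‖)⁻¹ • pel x z b)
      * ((Real.sqrt ‖pel x z b‖)⁻¹ • pel x z b)‖ = ‖pel x z b‖ := by
  rw [star_smul, star_trivial, pel_star, smul_mul_smul_comm, vopt_sq, norm_smul,
    Real.norm_eq_abs, abs_of_nonneg (by positivity)]
  rw [show pel x z b * pel x z b = star (pel x z b) * pel x z b by rw [pel_star],
    CStarRing.norm_star_mul_self, ← mul_assoc, inv_mul_cancel₀ (norm_pel_pos x z b).ne',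
    one_mul]

/-- The defining set of `cstarMatrixNorm`. -/
def SS {m n : ℕ} (M : Matrix (Fin m) (Fin n) B) : Set ℝ :=
  {r : ℝ | ∃ v : Fin n → B, ‖∑ i, star (v i) * v i‖ ≤ 1 ∧
    r = Real.sqrt ‖∑ j, star (M.mulVec v j) * M.mulVec v j‖}

lemma cstar_eq {m n : ℕ} (M : Matrix (Fin m) (Fin n) B) :
    cstarMatrixNorm M = sSup (SS M) := rfl

lemma row_fun_sum (v : Fin 4 → B) :
    ∑ i, ![(2:B), x, z, b] i * v i = 2 * v 0 + x * v 1 + z * v 2 + b * v 3 := by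
  simp [Fin.sum_univ_four]

lemma row_fun_p : ∑ i, ![(2:B), x, z, b] i * star (![(2:B), x, z, b] i) = pel x z b := by
  simp [Fin.sum_univ_four, pel]

lemma row1_fun_sum (v : Fin 4 → B) :
    ∑ i, ![(0:B), y, 1, 0] i * v i = y * v 1 + v 2 := by
  simp [Fin.sum_univ_four]

lemma row1_fun_p : ∑ i, ![(0:B), y, 1, 0] i * star (![(0:B), y, 1, 0] i)
    = y * star y + 1 := by
  simp [Fin.sum_univ_four]

lemma row1_orth : ∑ i, ![(0:B), y, 1, 0] i * star (![(2:B), x, z, b] i)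
    = y * star x + star z := by
  simp [Fin.sum_univ_four]

lemma row1_norm_le [Nontrivial B] (hy : ‖y‖ ≤ 1) : ‖y * star y + 1‖ ≤ ‖pel x z b‖ := by
  have h1 : ‖y * star y + 1‖ ≤ ‖y * star y‖ + ‖(1:B)‖ := norm_add_le _ _
  rw [CStarRing.norm_self_mul_star, norm_one] at h1
  have h2 := four_le_norm_pel x z b
  nlinarith [norm_nonneg y]

lemma norm_row_eq [Nontrivial B] :
    cstarMatrixNorm !![(2:B), x, z, b] = Real.sqrt ‖pel x z b‖ := by
  rw [cstar_eq]
  apply IsGreatest.csSup_eq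
  constructor
  · exact ⟨vopt x z b, vopt_constraint x z b, by
      rw [mulVec_row, vopt_rowval, vopt_rownorm]⟩
  · rintro r ⟨v, hv, rfl⟩
    apply Real.sqrt_le_sqrt
    rw [mulVec_row]
    have := key_ineq1 ![(2:B), x, z, b] v ‖pel x z b‖ (norm_pel_pos x z b)
      (le_of_eq (by rw [row_fun_p])) hv
    rwa [row_fun_sum] at this

lemma vopt_uval :
    y * vopt x z b 1 + vopt x z b 2
      = (Real.sqrt ‖pel x z b‖)⁻¹ • (y * star x + star z) := by
  simp only [vopt, Matrix.cons_val_zero, Matrix.cons_val_one, Matrix.head_cons,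
    Matrix.cons_val_two, Matrix.tail_cons, mul_smul_comm]
  rw [← smul_add]

lemma norm_two_eq [Nontrivial B] (hy : ‖y‖ ≤ 1) (hc : y * star x + star z = 0) :
    cstarMatrixNorm !![0, y, 1, 0; 2, x, z, b] = Real.sqrt ‖pel x z b‖ := by
  rw [cstar_eq]
  apply IsGreatest.csSup_eq
  constructor
  · refine ⟨vopt x z b, vopt_constraint x z b, ?_⟩
    rw [mulVec_two, vopt_uval, hc, smul_zero, star_zero, zero_mul, zero_add,
      vopt_rowval, vopt_rownorm]
  · rintro r ⟨v, hv, rfl⟩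
    apply Real.sqrt_le_sqrt
    rw [mulVec_two]
    have := key_ineq ![(0:B), y, 1, 0] ![(2:B), x, z, b] v ‖pel x z b‖
      (norm_pel_pos x z b) (by rw [row1_orth]; exact hc)
      (by rw [row1_fun_p]; exact row1_norm_le x y z b hy)
      (le_of_eq (by rw [row_fun_p])) hv
    rwa [row1_fun_sum, row_fun_sum] at this

lemma SS_two_bdd : BddAbove (SS !![0, y, 1, 0; 2, x, z, b]) := by
  refine ⟨Real.sqrt ((‖y * star y + 1‖ + 1) + (‖pel x z b‖ + 1)), ?_⟩
  rintro r ⟨v, hv, rfl⟩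
  apply Real.sqrt_le_sqrt
  rw [mulVec_two]
  have h1 := key_ineq1 ![(0:B), y, 1, 0] v (‖y * star y + 1‖ + 1)
    (by positivity) (by rw [row1_fun_p]; linarith) hv
  have h2 := key_ineq1 ![(2:B), x, z, b] v (‖pel x z b‖ + 1)
    (by positivity) (by rw [row_fun_p]; linarith) hv
  rw [row1_fun_sum] at h1
  rw [row_fun_sum] at h2
  exact (norm_add_le _ _).trans (add_le_add h1 h2)

lemma algMono {r s : ℝ} (h : r ≤ s) : algebraMap ℝ B r ≤ algebraMap ℝ B s := by
  rw [← sub_nonneg, ← map_sub, Algebra.algebraMap_eq_smul_one]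
  exact smul_nonneg (sub_nonneg.mpr h) (by simpa using star_mul_self_nonneg (1:B))

end Explicit

lemma heart [Nontrivial B] (x y z : B) (hy : ‖y‖ ≤ 1) (h : CondC x y z) :
    y * star x + star z = 0 := by
  set c := y * star x + star z with hc
  set A0 : B := star c * c with hA0
  set q : B := 2 * star (2:B) + x * star x + z * star z with hq
  have hq0 : (0:B) ≤ q :=
    add_nonneg (add_nonneg (mul_star_self_nonneg _) (mul_star_self_nonneg _))
      (mul_star_self_nonneg _)
  have hA00 : (0:B) ≤ A0 := star_mul_self_nonneg c
  have main : ∀ t : ℝ, 0 < t → (t*t) * ‖A0‖ ≤ ‖q‖ := by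
    intro t ht
    set b := t • star c with hb
    have hbb : b * star b = (t*t) • A0 := by
      rw [hA0, hb]
      simp [smul_mul_smul_comm, smul_smul]
    have hpq : pel x z b = q + (t*t) • A0 := by
      rw [pel, hbb, hq]
    set α := ‖pel x z b‖ with hα
    have hα0 : 0 < α := norm_pel_pos x z b
    -- the norm bound from the hypothesis CondC
    have hval : Real.sqrt ‖‖pel x z b‖⁻¹ • (A0 + pel x z b * pel x z b)‖
        ∈ SS !![0, y, 1, 0; 2, x, z, b] := by
      refine ⟨vopt x z b, vopt_constraint x z b, ?_⟩
      rw [mulVec_two, vopt_uval, ← hc, vopt_rowval]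
      congr 2
      simp only [star_smul, star_trivial, smul_mul_smul_comm, pel_star, vopt_sq, smul_add, hA0]
    have hle : Real.sqrt ‖‖pel x z b‖⁻¹ • (A0 + pel x z b * pel x z b)‖ ≤ Real.sqrt α := by
      have h1 := le_csSup (SS_two_bdd x y z b) hval
      rw [← cstar_eq] at h1
      rw [h b, norm_row_eq] at h1
      exact h1
    have hXle : ‖A0 + pel x z b * pel x z b‖ ≤ α * α := by
      have h2 : ‖pel x z b‖⁻¹ * ‖A0 + pel x z b * pel x z b‖ ≤ α := by
        have h3 : ‖‖pel x z b‖⁻¹ • (A0 + pel x z b * pel x z b)‖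
            = ‖pel x z b‖⁻¹ * ‖A0 + pel x z b * pel x z b‖ := by
          rw [norm_smul, Real.norm_eq_abs, abs_of_nonneg (by positivity)]
        have h4 : (0:ℝ) ≤ ‖pel x z b‖⁻¹ * ‖A0 + pel x z b * pel x z b‖ := by positivity
        nlinarith [Real.sq_sqrt h4, Real.sq_sqrt hα0.le, Real.sqrt_nonneg α,
          Real.sqrt_nonneg (‖pel x z b‖⁻¹ * ‖A0 + pel x z b * pel x z b‖),
          h3 ▸ hle]
      have h5 := mul_le_mul_of_nonneg_left h2 hα0.le
      rwa [← mul_assoc, mul_inv_cancel₀ hα0.ne', one_mul] at h5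
    -- positivity facts
    have hpp : (0:B) ≤ pel x z b * pel x z b := by
      have := star_mul_self_nonneg (pel x z b)
      rwa [pel_star] at this
    have hX0 : (0:B) ≤ A0 + pel x z b * pel x z b := add_nonneg hA00 hpp
    have hXle' : A0 + pel x z b * pel x z b ≤ algebraMap ℝ B (α * α) :=
      le_trans (IsSelfAdjoint.of_nonneg hX0).le_algebraMap_norm_self (algMono hXle)
    have hscaled : pel x z b + (t*t) • (pel x z b * pel x z b) ≤ ((t*t) * (α*α)) • 1 + q := by
      have h1 := smul_le_smul_of_nonneg_left hXle' (mul_self_nonneg t)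
      rw [smul_add] at h1
      have h2 : (t*t) • A0 = pel x z b - q := by rw [hpq]; abel
      rw [h2, Algebra.algebraMap_eq_smul_one, smul_smul] at h1
      have h4 : pel x z b - q + (t*t) • (pel x z b * pel x z b)
          = (pel x z b + (t*t) • (pel x z b * pel x z b)) - q := by abel
      rw [h4] at h1
      exact sub_le_iff_le_add.mp h1
    have hL0 : (0:B) ≤ pel x z b + (t*t) • (pel x z b * pel x z b) :=
      add_nonneg (pel_nonneg x z b) (smul_nonneg (mul_self_nonneg t) hpp)
    have hnorm1 : ‖pel x z b + (t*t) • (pel x z b * pel x z b)‖ ≤ (t*t) * (α*α) + ‖q‖ := by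
      refine le_trans (CStarAlgebra.norm_le_norm_of_nonneg_of_le hL0 hscaled) ?_
      refine le_trans (norm_add_le _ _) ?_
      rw [norm_smul, Real.norm_eq_abs, norm_one, mul_one, abs_of_nonneg (by positivity)]
    have hspec : α + (t*t) * (α*α) ≤ ‖pel x z b + (t*t) • (pel x z b * pel x z b)‖ := by
      have hmem : α ∈ spectrum ℝ (pel x z b) :=
        CStarAlgebra.norm_mem_spectrum_of_nonneg (pel_nonneg x z b)
      have haev : (Polynomial.aeval (pel x z b))
          (Polynomial.X + Polynomial.C (t*t) * Polynomial.X ^ 2)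
          = pel x z b + (t*t) • (pel x z b * pel x z b) := by
        simp [Algebra.smul_def, sq, mul_assoc]
      have h5 := spectrum.subset_polynomial_aeval (pel x z b)
        (Polynomial.X + Polynomial.C (t*t) * Polynomial.X ^ 2) ⟨α, hmem, rfl⟩
      rw [haev] at h5
      have h6 := spectrum.norm_le_norm_of_mem h5
      simp only [Polynomial.eval_add, Polynomial.eval_mul, Polynomial.eval_pow,
        Polynomial.eval_X, Polynomial.eval_C, Real.norm_eq_abs] at h6
      have h7 : (0:ℝ) ≤ α + (t*t) * α ^ 2 := by positivity
      rw [abs_of_nonneg h7] at h6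
      calc α + (t*t) * (α*α) = α + (t*t) * α ^ 2 := by ring_nf
        _ ≤ _ := h6
    have hαq : α ≤ ‖q‖ := by linarith
    have hfin : ‖(t*t) • A0‖ ≤ α := by
      have h2 : (t*t) • A0 = pel x z b - q := by rw [hpq]; abel
      have h8 : (t*t) • A0 ≤ pel x z b := by rw [h2]; exact sub_le_self _ hq0
      exact CStarAlgebra.norm_le_norm_of_nonneg_of_le
        (smul_nonneg (mul_self_nonneg t) hA00) h8
    rw [norm_smul, Real.norm_eq_abs, abs_of_nonneg (mul_self_nonneg t)] at hfin
    exact hfin.trans hαq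
  -- conclude ‖A0‖ = 0
  have hA0z : ‖A0‖ = 0 := by
    by_contra hne
    have hpos : 0 < ‖A0‖ := lt_of_le_of_ne (norm_nonneg _) (Ne.symm hne)
    set t := Real.sqrt ((‖q‖ + 1) / ‖A0‖) with htdef
    have ht : 0 < t := Real.sqrt_pos.mpr (by positivity)
    have htt : t * t = (‖q‖ + 1) / ‖A0‖ := Real.mul_self_sqrt (by positivity)
    have := main t ht
    rw [htt, div_mul_cancel₀ _ hpos.ne'] at this
    linarith
  have : c = 0 := by
    rw [hA0, CStarRing.norm_star_mul_self] at hA0z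
    have := mul_self_eq_zero.mp hA0z
    exact norm_eq_zero.mp this
  exact this

end LeftMultAux

lemma LeftMultAux.cstar_subsingleton {B : Type*} [CStarAlgebra B] [PartialOrder B]
    [StarOrderedRing B] (hB : Subsingleton B)
    {m n : ℕ} (M : Matrix (Fin m) (Fin n) B) : cstarMatrixNorm M = 0 := by
  have hset : LeftMultAux.SS M = {0} := by
    ext r
    constructor
    · rintro ⟨v, -, rfl⟩
      rw [Subsingleton.elim (∑ j, star (M.mulVec v j) * M.mulVec v j) 0, norm_zero,
        Real.sqrt_zero]
      rfl
    · rintro rfl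
      exact ⟨fun _ => 0, by simp, by
        rw [Subsingleton.elim (∑ j, star (M.mulVec (fun _ => 0) j) * M.mulVec (fun _ => 0) j) 0]
        simp⟩
  rw [LeftMultAux.cstar_eq, hset, csSup_singleton]

/-- Corollary 6.2 (1): for `x ∈ A`, `x A ⊆ A` iff for every contraction `y` with `y* ∈ A`
there is `z ∈ A` with `C(x,y,z)`. -/
theorem left_mult_iff {B : Type*} [CStarAlgebra B] (A : Submodule ℂ B) (x : B) (hx : x ∈ A) :
    (∀ a ∈ A, x * a ∈ A) ↔
      (∀ y : B, star y ∈ A → ‖y‖ ≤ 1 → ∃ z ∈ A, CondC x y z) := by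
  rcases subsingleton_or_nontrivial B with hB | hB
  · letI : PartialOrder B := CStarAlgebra.spectralOrder B
    haveI : StarOrderedRing B := CStarAlgebra.spectralOrderedRing B
    constructor
    · intro _ y _ _
      refine ⟨0, A.zero_mem, fun b => ?_⟩
      rw [LeftMultAux.cstar_subsingleton hB, LeftMultAux.cstar_subsingleton hB]
    · intro _ a _
      rw [Subsingleton.elim (x * a) 0]
      exact A.zero_mem
  · letI : PartialOrder B := CStarAlgebra.spectralOrder B
    haveI : StarOrderedRing B := CStarAlgebra.spectralOrderedRing B
    constructor
    · intro hmul y hyA hy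
      refine ⟨-(x * star y), A.neg_mem (hmul _ hyA), fun b => ?_⟩
      have hc : y * star x + star (-(x * star y)) = 0 := by
        rw [star_neg, star_mul, star_star, add_neg_cancel]
      rw [LeftMultAux.norm_two_eq x y _ b hy hc, LeftMultAux.norm_row_eq]
    · intro hcond a ha
      rcases eq_or_ne a 0 with rfl | ha0
      · rw [mul_zero]; exact A.zero_mem
      · have hna : (0:ℝ) < ‖a‖ := norm_pos_iff.mpr ha0
        have hsmulmem : ∀ (r : ℝ) (w : B), w ∈ A → r • w ∈ A := by
          intro r w hw
          have : ((r : ℂ)) • w = r • w := by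
            rw [← Complex.coe_algebraMap, algebraMap_smul]
          rw [← this]
          exact A.smul_mem _ hw
        set y : B := ‖a‖⁻¹ • star a with hy
        have hys : star y = ‖a‖⁻¹ • a := by
          rw [hy, star_smul, star_trivial, star_star]
        have hyA : star y ∈ A := by
          rw [hys]; exact hsmulmem _ _ ha
        have hy1 : ‖y‖ ≤ 1 := by
          rw [hy, norm_smul, Real.norm_eq_abs, abs_of_nonneg (by positivity), norm_star,
            inv_mul_cancel₀ hna.ne']
        obtain ⟨z, hzA, hz⟩ := hcond y hyA hy1
        have h0 := LeftMultAux.heart x y z hy1 hz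
        have hz1 : z = -(x * star y) := by
          have h1 : star z = -(y * star x) := eq_neg_of_add_eq_zero_right h0
          have := congrArg star h1
          rwa [star_star, star_neg, star_mul, star_star] at this
        have hxa : x * a = -(‖a‖ • z) := by
          rw [hz1, hys, smul_neg, neg_neg, mul_smul_comm, smul_smul,
            mul_inv_cancel₀ hna.ne', one_smul]
        rw [hxa]
        exact A.neg_mem (hsmulmem _ _ hzA)
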